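/- arXiv:math/0204052 — 2 statements merged into one kernel-verified Lean document; each statement's English description precedes it below -/
import Mathlib

section
/- Let S be a commutative monoid, A_j = {a_{1,j},...,a_{k_j,j}} ⊆ S for j = 1,...,r, k = Σ k_j, and f : ℕ^k → S the homomorphism f(x) = Σ_j Σ_i x_{i,j} a_{i,j}. Call x ∈ ℕ^k r-useless if there exists u with the same r-height as x (the same block-wise coordinate sums), f(u) = f(x), and u <_lex x. Then the set of r-useless points is an ideal of ℕ^k: it is closed under addition of arbitrary elements of ℕ^k. -/
/-- x <_lex y on ℕ^{k₁} × ⋯ × ℕ^{k_r}, with blocks concatenated in order: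
x and y agree on all coordinates preceding the coordinate (j,i), where x j i < y j i. -/
def lexLtBlocks {r : ℕ} {k : Fin r → ℕ} (x y : ∀ j : Fin r, Fin (k j) → ℕ) : Prop :=
  ∃ j : Fin r, ∃ i : Fin (k j),
    (∀ j' < j, x j' = y j') ∧ (∀ i' < i, x j i' = y j i') ∧ x j i < y j i

theorem lexLtBlocks.add_right {r : ℕ} {k : Fin r → ℕ} {u x : ∀ j : Fin r, Fin (k j) → ℕ}
    (h : lexLtBlocks u x) (t : ∀ j : Fin r, Fin (k j) → ℕ) :
    lexLtBlocks (u + t) (x + t) := by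
  obtain ⟨j, i, hblocks, hcoords, hlt⟩ := h
  refine ⟨j, i, fun j' hj' => ?_, fun i' hi' => ?_, ?_⟩
  · simp only [Pi.add_apply, hblocks j' hj']
  · simp only [Pi.add_apply, hcoords i' hi']
  · simpa only [Pi.add_apply] using Nat.add_lt_add_right hlt (t j i)

theorem stmt_13 {S : Type*} [AddCommMonoid S] (r : ℕ) (k : Fin r → ℕ)
    (a : ∀ j : Fin r, Fin (k j) → S)
    (f : (∀ j : Fin r, Fin (k j) → ℕ) → S)
    (hf : ∀ x, f x = ∑ j, ∑ i, x j i • a j i)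
    (useless : (∀ j : Fin r, Fin (k j) → ℕ) → Prop)
    (huseless : ∀ x, useless x ↔
      ∃ u, (∀ j, ∑ i, u j i = ∑ i, x j i) ∧ f u = f x ∧ lexLtBlocks u x) :
    ∀ x t, useless x → useless (x + t) := by
  intro x t hx
  rw [huseless] at hx ⊢
  obtain ⟨u, hheight, hfu, hlex⟩ := hx
  have hf_add : ∀ y z, f (y + z) = f y + f z := fun y z => by
    simp only [hf, Pi.add_apply, add_smul, Finset.sum_add_distrib]
  refine ⟨u + t, fun j => ?_, by rw [hf_add, hf_add, hfu], hlex.add_right t⟩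
  simp only [Pi.add_apply, Finset.sum_add_distrib, hheight]
end

section
/- If A is a finite nonempty subset of ℕ (the nonnegative integers), then there exist integers c, d and h_0 such that |hA| = c·h + d for all h ≥ h_0; that is, the cardinality of the h-fold sumset of a finite set of nonnegative integers is eventually a linear function of h. -/
/-!
Translate and dilate `A` so that `0 ∈ A` and `gcd A = 1`; this does not change `|h • A|`. Let
`b = max A`. By the Frobenius-number theorem every large integer is a sum of elements of `A`, and
adding copies of `b` shows that `h • A` contains the whole interval `[C, h * b - C)` for a
constant `C`. What remains are the parts of `h • A` in `[0, C)` and, measured from the top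
`h * b`, in `[0, C]`. As `0, b ∈ A`, both grow with `h` and are bounded, hence eventually
constant; so `|h • A| = b * h + const` for large `h`.
-/

open Pointwise Filter Finset

namespace Khovanskii

theorem eventually_eq_iSup_of_monotone {f : ℕ → ℕ} (hf : Monotone f)
    (hbdd : BddAbove (Set.range f)) : ∀ᶠ n in atTop, f n = ⨆ i, f i :=
  tendsto_pure.1 (nhds_discrete ℕ ▸ tendsto_atTop_ciSup hf hbdd)

theorem exists_eventually_card_eq {α : Type*} {f : ℕ → Finset α} (hf : Monotone f)
    (T : Finset α) (hT : ∀ n, f n ⊆ T) : ∃ c, ∀ᶠ n in atTop, #(f n) = c :=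
  ⟨_, eventually_eq_iSup_of_monotone (fun _ _ hmn => card_le_card (hf hmn))
    ⟨#T, by rintro _ ⟨n, rfl⟩; exact card_le_card (hT n)⟩⟩

theorem exists_mem_nsmul_of_mem_closure {M : Type*} [AddMonoid M] [DecidableEq M]
    {s : Finset M} {x : M} (hx : x ∈ AddSubmonoid.closure (s : Set M)) : ∃ k : ℕ, x ∈ k • s := by
  induction hx using AddSubmonoid.closure_induction with
  | mem x hx => exact ⟨1, by simpa using hx⟩
  | zero => exact ⟨0, by simp⟩
  | add x y _ _ hx hy =>
    obtain ⟨k, hk⟩ := hx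
    obtain ⟨l, hl⟩ := hy
    exact ⟨k + l, add_nsmul s k l ▸ add_mem_add hk hl⟩

theorem le_mul_of_mem_nsmul {A : Finset ℕ} {b : ℕ} (hb : ∀ a ∈ A, a ≤ b) :
    ∀ {h x : ℕ}, x ∈ h • A → x ≤ h * b
  | 0, x, hx => by simp_all
  | h + 1, x, hx => by
    rw [succ_nsmul, Finset.mem_add] at hx
    obtain ⟨y, hy, a, ha, rfl⟩ := hx
    have := le_mul_of_mem_nsmul hb hy
    have := hb a ha
    rw [add_one_mul]
    omega

theorem exists_Ico_subset_nsmul {A : Finset ℕ} {b : ℕ} (h0 : 0 ∈ A) (hbA : b ∈ A)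
    (hgcd : Nat.setGcd A = 1) : ∃ C, ∀ h, Ico C (h * b - C) ⊆ h • A := by
  obtain ⟨N, hN⟩ := Nat.exists_mem_closure_of_ge (A : Set ℕ)
  have hmono : Monotone (· • A) := fun _ _ => nsmul_subset_nsmul_right h0
  -- one window of `b` consecutive integers fits in a single `K • A`; shifting by `b` covers the rest
  obtain ⟨K, hK⟩ : ∃ K, Ico N (N + b) ⊆ K • A := by
    have : ∀ m ∈ Ico N (N + b), ∀ᶠ k in atTop, m ∈ k • A := fun m hm => by
      obtain ⟨k, hk⟩ :=
        exists_mem_nsmul_of_mem_closure (hN m (mem_Ico.1 hm).1 (hgcd ▸ one_dvd m))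
      exact eventually_atTop.2 ⟨k, fun l hl => hmono hl hk⟩
    exact ((eventually_all_finset _).2 this).exists
  have hshift : ∀ q, Ico N (N + q * b) ⊆ (K + q) • A := by
    intro q
    induction q with
    | zero => simp
    | succ q ih =>
      intro x hx
      rw [mem_Ico, add_one_mul] at hx
      rcases lt_or_ge x (N + b) with hxb | hxb
      · exact hmono (by omega) (hK (mem_Ico.2 ⟨hx.1, hxb⟩))
      · rw [← add_assoc, succ_nsmul, show x = x - b + b by omega]
        exact add_mem_add (ih (mem_Ico.2 ⟨by omega, by omega⟩)) hbA
  refine ⟨N + K * b, fun h x hx => ?_⟩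
  rw [mem_Ico] at hx
  obtain ⟨q, rfl⟩ : ∃ q, h = K + q :=
    Nat.exists_eq_add_of_le (Nat.lt_of_mul_lt_mul_right (a := b) (by omega)).le
  rw [add_mul] at hx
  exact hshift q (mem_Ico.2 ⟨by omega, by omega⟩)

/-- Measuring from `h * b` makes this monotone in `h` once `b ∈ A`. -/
def topDepths (A : Finset ℕ) (b C h : ℕ) : Finset ℕ :=
  (range (C + 1)).filter (fun y => y ≤ h * b ∧ h * b - y ∈ h • A)

theorem monotone_topDepths {A : Finset ℕ} {b : ℕ} (hbA : b ∈ A) (C : ℕ) :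
    Monotone (topDepths A b C) := by
  refine monotone_nat_of_le_succ fun h y hy => ?_
  simp only [topDepths, mem_filter] at hy ⊢
  obtain ⟨hyC, hyh, hyA⟩ := hy
  rw [add_one_mul, succ_nsmul, show h * b + b - y = (h * b - y) + b by omega]
  exact ⟨hyC, by omega, add_mem_add hyA hbA⟩

theorem card_nsmul_eq_of_Ico_subset {A : Finset ℕ} {b C h : ℕ} (hb : ∀ a ∈ A, a ≤ b)
    (hC : 2 * C ≤ h * b) (hmid : Ico C (h * b - C) ⊆ h • A) :
    #(h • A) = #((h • A).filter (· < C)) + (h * b - 2 * C) + #(topDepths A b C h) := by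
  have hmid' : ((h • A).filter (¬ · < C)).filter (· < h * b - C) = Ico C (h * b - C) := by
    ext x
    simp only [mem_filter, mem_Ico, not_lt]
    exact ⟨fun hx => ⟨hx.1.2, hx.2⟩, fun hx => ⟨⟨hmid (mem_Ico.2 hx), hx.1⟩, hx.2⟩⟩
  have htop : #(((h • A).filter (¬ · < C)).filter (¬ · < h * b - C)) = #(topDepths A b C h) := by
    refine card_nbij' (h * b - ·) (h * b - ·) ?_ ?_ ?_ ?_ <;>
      simp only [topDepths, Set.MapsTo, Set.LeftInvOn, mem_coe, mem_filter, mem_range]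
    · rintro x ⟨⟨hx, -⟩, hxC⟩
      have := le_mul_of_mem_nsmul hb hx
      exact ⟨by omega, by omega, by rwa [Nat.sub_sub_self this]⟩
    · rintro y ⟨hyC, hyh, hy⟩
      exact ⟨⟨hy, by omega⟩, by omega⟩
    · rintro x ⟨⟨hx, -⟩, -⟩
      exact Nat.sub_sub_self (le_mul_of_mem_nsmul hb hx)
    · rintro y ⟨-, hyh, -⟩
      exact Nat.sub_sub_self hyh
  rw [← card_filter_add_card_filter_not (· < C) (s := h • A),
    ← card_filter_add_card_filter_not (· < h * b - C) (s := (h • A).filter (¬ · < C)),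
    hmid', htop, Nat.card_Ico]
  omega

theorem exists_eventually_card_nsmul_eq_of_zero_mem {A : Finset ℕ} (h0 : 0 ∈ A)
    (hgcd : Nat.setGcd A = 1) : ∃ c d : ℤ, ∀ᶠ h : ℕ in atTop, (#(h • A) : ℤ) = c * h + d := by
  set b := A.max' ⟨0, h0⟩
  have hbA : b ∈ A := max'_mem _ _
  have hb : ∀ a ∈ A, a ≤ b := fun a ha => le_max' A a ha
  have hbpos : 0 < b := by
    obtain ⟨a, ha, ha0⟩ := Nat.exists_ne_zero_of_setGcd_ne_zero (hgcd ▸ one_ne_zero)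
    exact (Nat.pos_of_ne_zero ha0).trans_le (hb a ha)
  obtain ⟨C, hC⟩ := exists_Ico_subset_nsmul h0 hbA hgcd
  obtain ⟨l, hl⟩ := exists_eventually_card_eq (f := fun h => (h • A).filter (· < C))
    (fun _ _ hmn => filter_subset_filter _ (nsmul_subset_nsmul_right h0 hmn)) (range C)
    (fun _ x hx => mem_range.2 (mem_filter.1 hx).2)
  obtain ⟨t, ht⟩ := exists_eventually_card_eq (monotone_topDepths hbA C) _
    (fun _ => filter_subset _ _)
  refine ⟨b, l + t - 2 * C, ?_⟩
  filter_upwards [hl, ht, eventually_ge_atTop (2 * C)] with h hlh hth hh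
  have h2C : 2 * C ≤ h * b := hh.trans (Nat.le_mul_of_pos_right h hbpos)
  rw [card_nsmul_eq_of_Ico_subset hb h2C (hC h), hlh, hth]
  push_cast [Nat.cast_sub h2C]
  ring

theorem card_nsmul_singleton_add_image_mul (B : Finset ℕ) {g : ℕ} (hg : g ≠ 0) (a h : ℕ) :
    #(h • ({a} + B.image (g * ·))) = #(h • B) := by
  rw [nsmul_add, nsmul_singleton, card_singleton_add,
    show B.image (g * ·) = B.image (AddMonoidHom.mulLeft g) from rfl, ← image_nsmul]
  exact card_image_of_injective _ (mul_right_injective₀ hg)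

theorem exists_eq_singleton_add_image_mul {A : Finset ℕ} (hA : A.Nonempty) (hA1 : ∀ a, A ≠ {a}) :
    ∃ a g : ℕ, ∃ B : Finset ℕ, g ≠ 0 ∧ 0 ∈ B ∧ Nat.setGcd B = 1 ∧ A = {a} + B.image (g * ·) := by
  set a := A.min' hA
  have ha : ∀ x ∈ A, a ≤ x := fun x hx => min'_le A x hx
  set g := Nat.setGcd (A.image (· - a))
  have hgA : ∀ x ∈ A, g ∣ x - a := fun x hx => Nat.setGcd_dvd_of_mem (by simpa using ⟨x, hx, rfl⟩)
  have hg : g ≠ 0 := by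
    refine fun hg0 => hA1 a (eq_singleton_iff_unique_mem.2 ⟨min'_mem A hA, fun x hx => ?_⟩)
    have := Set.mem_singleton_iff.1 (Nat.setGcd_eq_zero_iff.1 hg0 (by simpa using ⟨x, hx, rfl⟩))
    have := ha x hx
    omega
  refine ⟨a, g, A.image (fun x => (x - a) / g), hg, ?_, ?_, ?_⟩
  · exact mem_image.2 ⟨a, min'_mem A hA, by simp⟩
  · apply Nat.dvd_one.1
    rw [← Nat.mul_dvd_mul_iff_left (Nat.pos_of_ne_zero hg), mul_one]
    refine Nat.dvd_setGcd_iff.2 fun m hm => ?_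
    obtain ⟨x, hx, rfl⟩ := mem_image.1 hm
    rw [← Nat.mul_div_cancel' (hgA x hx)]
    exact mul_dvd_mul_left g (Nat.setGcd_dvd_of_mem (mem_image_of_mem _ hx))
  · have hrecover : ∀ x ∈ A, a + g * ((x - a) / g) = x := fun x hx => by
      rw [Nat.mul_div_cancel' (hgA x hx)]
      have := ha x hx
      omega
    ext x
    simp only [singleton_add, mem_vadd_finset, mem_image, vadd_eq_add, exists_exists_and_eq_and]
    exact ⟨fun hx => ⟨x, hx, hrecover x hx⟩, fun ⟨y, hy, hyx⟩ => by rwa [← hyx, hrecover y hy]⟩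

end Khovanskii

open Khovanskii in
theorem stmt_19 (A : Finset ℕ) (hA : A.Nonempty) :
    ∃ c d : ℤ, ∃ h₀ : ℕ, ∀ h ≥ h₀, ((h • A).card : ℤ) = c * h + d := by
  by_cases hA1 : ∃ a, A = {a}
  · obtain ⟨a, rfl⟩ := hA1
    exact ⟨0, 1, 0, fun h _ => by simp⟩
  push Not at hA1
  obtain ⟨a, g, B, hg, hB0, hBgcd, rfl⟩ := exists_eq_singleton_add_image_mul hA hA1
  obtain ⟨c, d, hcd⟩ := exists_eventually_card_nsmul_eq_of_zero_mem hB0 hBgcd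
  obtain ⟨h₀, hh₀⟩ := eventually_atTop.1 hcd
  exact ⟨c, d, h₀, fun h hh => by rw [card_nsmul_singleton_add_image_mul B hg]; exact hh₀ h hh⟩
end
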